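/- arXiv:1803.09858 — 3 statements merged into one kernel-verified Lean document; each statement's English description precedes it below -/
import Mathlib

section
/- Under the SOE hypothesis, if the tolerance satisfies ε ≤ min{(1/3)ω_{1−α}(T), α·ω_{2−α}(1)}, then for every fixed n with 1 ≤ n ≤ N one has A^{(n)}_0 = a^{(n)}_0 and A^{(n)}_{n−k} ≥ (2/3)·a^{(n)}_{n−k} for 1 ≤ k ≤ n−1; in particular the fast kernel satisfies assumption A2 with π_A = 3/2. -/
open Real Finset MeasureTheory

/-- The kernel `ω_μ(s) = s^(μ-1)/Γ(μ)`. -/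
noncomputable def omegaK (μ s : ℝ) : ℝ := s ^ (μ - 1) / Real.Gamma μ

/-- The L1 kernel: `L1K α t n k` is `a^{(n)}_{n-k}`. -/
noncomputable def L1K (α : ℝ) (t : ℕ → ℝ) (n k : ℕ) : ℝ :=
  (omegaK (2 - α) (t n - t (k - 1)) - omegaK (2 - α) (t n - t k)) / (t k - t (k - 1))

/-- The fast L1 kernel: `fastK α t Nq θ w n k` is `A^{(n)}_{n-k}`. -/
noncomputable def fastK (α : ℝ) (t : ℕ → ℝ) (Nq : ℕ) (θ w : ℕ → ℝ) (n k : ℕ) : ℝ :=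
  if k = n then L1K α t n n
  else (∫ s in (t (k - 1))..(t k), ∑ ℓ ∈ Finset.range Nq, w ℓ * Real.exp (-(θ ℓ) * (t n - s))) /
    (t k - t (k - 1))

/-!
On `[t_{k-1}, t_k]` with `k < n` the argument `t_n - s` lies in `[τ_{k+1}, T]`, where the sum of
exponentials is `ε`-close to `ω_{1-α}`. Since `ω_{1-α}` is decreasing, `ω_{1-α}(t_n - s) ≥ ω_{1-α}(T) ≥ 3ε`,
so the sum is at least `(2/3) ω_{1-α}(t_n - s)`; averaging over `[t_{k-1}, t_k]` and using
`a^{(n)}_{n-k} = τ_k⁻¹ ∫ ω_{1-α}(t_n - s) ds` gives `A^{(n)}_{n-k} ≥ (2/3) a^{(n)}_{n-k}`. For `k = n` the two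
kernels coincide and are nonnegative.
-/

noncomputable def soeSum (Nq : ℕ) (θ w : ℕ → ℝ) (s : ℝ) : ℝ :=
  ∑ ℓ ∈ range Nq, w ℓ * exp (-(θ ℓ) * s)

lemma continuous_soeSum (Nq : ℕ) (θ w : ℕ → ℝ) : Continuous (soeSum Nq θ w) := by
  unfold soeSum
  fun_prop

lemma fastK_of_ne {α : ℝ} {t : ℕ → ℝ} {Nq : ℕ} {θ w : ℕ → ℝ} {n k : ℕ} (hkn : k ≠ n) :
    fastK α t Nq θ w n k =
      (∫ s in t (k - 1)..t k, soeSum Nq θ w (t n - s)) / (t k - t (k - 1)) :=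
  if_neg hkn

lemma omegaK_antitoneOn {μ : ℝ} (hμ0 : 0 < μ) (hμ1 : μ ≤ 1) : AntitoneOn (omegaK μ) (Set.Ioi 0) :=
  fun _ hx _ _ hxy =>
    div_le_div_of_nonneg_right (rpow_le_rpow_of_nonpos hx hxy (by linarith)) (Gamma_pos_of_pos hμ0).le

lemma omegaK_monotoneOn {μ : ℝ} (hμ : 1 ≤ μ) : MonotoneOn (omegaK μ) (Set.Ici 0) :=
  fun _ hx _ _ hxy =>
    div_le_div_of_nonneg_right (rpow_le_rpow hx hxy (by linarith))
      (Gamma_pos_of_pos (by linarith)).le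

lemma intervalIntegrable_omegaK_sub {μ : ℝ} (hμ : 0 < μ) (a b c : ℝ) :
    IntervalIntegrable (fun s => omegaK μ (c - s)) volume a b := by
  have h := ((intervalIntegral.intervalIntegrable_rpow' (r := μ - 1) (a := c - a) (b := c - b)
    (by linarith)).comp_sub_left c).div_const (Gamma μ)
  simpa only [omegaK, sub_sub_cancel] using h

lemma integral_omegaK_sub {μ : ℝ} (hμ : 0 < μ) (a b c : ℝ) :
    ∫ s in a..b, omegaK μ (c - s) = omegaK (μ + 1) (c - a) - omegaK (μ + 1) (c - b) := by
  simp only [omegaK]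
  rw [intervalIntegral.integral_div, intervalIntegral.integral_comp_sub_left
    (fun u => u ^ (μ - 1)) c, integral_rpow (Or.inl (by linarith)), Gamma_add_one hμ.ne',
    sub_add_cancel, add_sub_cancel_right]
  field_simp

lemma L1K_eq_average {α : ℝ} (hα : α < 1) (t : ℕ → ℝ) (n k : ℕ) :
    L1K α t n k = (∫ s in t (k - 1)..t k, omegaK (1 - α) (t n - s)) / (t k - t (k - 1)) := by
  rw [integral_omegaK_sub (by linarith), show 1 - α + 1 = 2 - α by ring, L1K]

lemma L1K_nonneg {α : ℝ} (hα : α ≤ 1) {t : ℕ → ℝ} {n k : ℕ} (hk : t (k - 1) ≤ t k)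
    (hkn : t k ≤ t n) : 0 ≤ L1K α t n k :=
  div_nonneg (sub_nonneg.mpr (omegaK_monotoneOn (by linarith) (sub_nonneg.mpr hkn)
    (sub_nonneg.mpr (hk.trans hkn)) (by linarith))) (sub_nonneg.mpr hk)

lemma strictMonoOn_Iic_of_pred_lt {N : ℕ} {t : ℕ → ℝ}
    (hmesh : ∀ k, 1 ≤ k → k ≤ N → t (k - 1) < t k) : StrictMonoOn t (Set.Iic N) :=
  strictMonoOn_Iic_of_lt_succ fun m hm => by
    simpa using hmesh (m + 1) (by omega) (Order.succ_le_of_lt hm)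

lemma two_thirds_omegaK_le_of_abs_sub_le {α ε T s y : ℝ} (hα0 : 0 < α) (hα1 : α < 1)
    (hs : 0 < s) (hsT : s ≤ T) (hy : |omegaK (1 - α) s - y| ≤ ε)
    (hε : ε ≤ 1 / 3 * omegaK (1 - α) T) : 2 / 3 * omegaK (1 - α) s ≤ y := by
  have hT : omegaK (1 - α) T ≤ omegaK (1 - α) s :=
    omegaK_antitoneOn (by linarith) (by linarith) hs (hs.trans_le hsT) hsT
  linarith [(abs_le.mp hy).2]

lemma two_thirds_L1K_le_fastK {T ε α : ℝ} {N n k Nq : ℕ} {t : ℕ → ℝ} {θ w : ℕ → ℝ}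
    (ht0 : t 0 = 0) (htN : t N = T) (hmesh : ∀ k, 1 ≤ k → k ≤ N → t (k - 1) < t k)
    (hα0 : 0 < α) (hα1 : α < 1)
    (hSOE : ∀ s : ℝ, (∃ k, 1 ≤ k ∧ k ≤ N ∧ t k - t (k - 1) ≤ s) → s ≤ T →
      |omegaK (1 - α) s - soeSum Nq θ w s| ≤ ε)
    (hε : ε ≤ 1 / 3 * omegaK (1 - α) T) (hk : 1 ≤ k) (hkn : k < n) (hnN : n ≤ N) :
    2 / 3 * L1K α t n k ≤ fastK α t Nq θ w n k := by
  have ht := (strictMonoOn_Iic_of_pred_lt hmesh).monotoneOn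
  have hτ : t (k - 1) < t k := hmesh k hk (by omega)
  have hk1n : t (k + 1) ≤ t n := ht (show k + 1 ≤ N by omega) hnN hkn
  have hk0 : t 0 ≤ t (k - 1) := ht (Nat.zero_le N) (show k - 1 ≤ N by omega) (Nat.zero_le _)
  have hnT : t n ≤ t N := ht hnN (le_refl N) hnN
  have hτsucc : t k < t (k + 1) := by simpa using hmesh (k + 1) (by omega) (by omega)
  have hpt : ∀ s ∈ Set.Icc (t (k - 1)) (t k),
      2 / 3 * omegaK (1 - α) (t n - s) ≤ soeSum Nq θ w (t n - s) := fun s hs =>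
    two_thirds_omegaK_le_of_abs_sub_le hα0 hα1 (by linarith [hs.2]) (by linarith [hs.1])
      (hSOE _ ⟨k + 1, by omega, by omega, by simp only [Nat.add_sub_cancel]; linarith [hs.2]⟩
        (by linarith [hs.1])) hε
  have hint := intervalIntegral.integral_mono_on hτ.le
    ((intervalIntegrable_omegaK_sub (by linarith) _ _ _).const_mul _)
    (((continuous_soeSum Nq θ w).comp (continuous_const.sub continuous_id)).intervalIntegrable _ _)
    hpt
  rw [intervalIntegral.integral_const_mul] at hint
  rw [L1K_eq_average hα1, fastK_of_ne hkn.ne, ← mul_div_assoc]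
  exact div_le_div_of_nonneg_right hint (sub_nonneg.mpr hτ.le)

theorem fast_kernel_lower_bound_and_A2_general
    (T : ℝ) (N : ℕ)
    (t : ℕ → ℝ) (ht0 : t 0 = 0) (htN : t N = T)
    (hmesh : ∀ k, 1 ≤ k → k ≤ N → t (k - 1) < t k)
    (α : ℝ) (hα0 : 0 < α) (hα1 : α < 1)
    (Nq : ℕ) (θ w : ℕ → ℝ)
    (ε : ℝ)
    (hSOE : ∀ s : ℝ, (∃ k, 1 ≤ k ∧ k ≤ N ∧ t k - t (k - 1) ≤ s) → s ≤ T →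
      |omegaK (1 - α) s - ∑ ℓ ∈ Finset.range Nq, w ℓ * Real.exp (-(θ ℓ) * s)| ≤ ε)
    (hεb : ε ≤ min ((1 / 3) * omegaK (1 - α) T) (α * omegaK (2 - α) 1)) :
    ∀ n, 1 ≤ n → n ≤ N →
      fastK α t Nq θ w n n = L1K α t n n ∧
      (∀ k, 1 ≤ k → k ≤ n - 1 → fastK α t Nq θ w n k ≥ (2 / 3) * L1K α t n k) ∧
      (∀ k, 1 ≤ k → k ≤ n → fastK α t Nq θ w n k ≥
        (1 / ((3 / 2) * (t k - t (k - 1)))) *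
          ∫ s in (t (k - 1))..(t k), omegaK (1 - α) (t n - s)) := by
  intro n _ hnN
  have hbound : ∀ k, 1 ≤ k → k < n → 2 / 3 * L1K α t n k ≤ fastK α t Nq θ w n k :=
    fun k hk hkn => two_thirds_L1K_le_fastK ht0 htN hmesh hα0 hα1 hSOE
      (hεb.trans (min_le_left _ _)) hk hkn hnN
  refine ⟨if_pos rfl, fun k hk hkn => hbound k hk (by omega), fun k hk hkn => ?_⟩
  have hA2 : 1 / ((3 / 2) * (t k - t (k - 1))) * ∫ s in t (k - 1)..t k, omegaK (1 - α) (t n - s) =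
      2 / 3 * L1K α t n k := by
    rw [L1K_eq_average hα1, one_div, mul_inv]
    ring
  rw [ge_iff_le, hA2]
  obtain rfl | hkn := hkn.eq_or_lt
  · have hnonneg : 0 ≤ L1K α t k k := L1K_nonneg hα1.le (hmesh k hk hnN).le le_rfl
    rw [fastK, if_pos rfl]
    linarith
  · exact hbound k hk hkn

theorem fast_kernel_lower_bound_and_A2
    (T : ℝ) (hT : 0 < T) (N : ℕ) (hN : 1 ≤ N)
    (t : ℕ → ℝ) (ht0 : t 0 = 0) (htN : t N = T)
    (hmesh : ∀ k, 1 ≤ k → k ≤ N → t (k - 1) < t k)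
    (α : ℝ) (hα0 : 0 < α) (hα1 : α < 1)
    (Nq : ℕ) (hNq : 1 ≤ Nq) (θ w : ℕ → ℝ)
    (hθ : ∀ ℓ, ℓ < Nq → 0 < θ ℓ) (hw : ∀ ℓ, ℓ < Nq → 0 < w ℓ)
    (ε : ℝ) (hε : 0 < ε)
    (hSOE : ∀ s : ℝ, (∃ k, 1 ≤ k ∧ k ≤ N ∧ t k - t (k - 1) ≤ s) → s ≤ T →
      |omegaK (1 - α) s - ∑ ℓ ∈ Finset.range Nq, w ℓ * Real.exp (-(θ ℓ) * s)| ≤ ε)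
    (hεb : ε ≤ min ((1 / 3) * omegaK (1 - α) T) (α * omegaK (2 - α) 1)) :
    ∀ n, 1 ≤ n → n ≤ N →
      fastK α t Nq θ w n n = L1K α t n n ∧
      (∀ k, 1 ≤ k → k ≤ n - 1 → fastK α t Nq θ w n k ≥ (2 / 3) * L1K α t n k) ∧
      (∀ k, 1 ≤ k → k ≤ n → fastK α t Nq θ w n k ≥
        (1 / ((3 / 2) * (t k - t (k - 1)))) *
          ∫ s in (t (k - 1))..(t k), omegaK (1 - α) (t n - s)) :=
  fast_kernel_lower_bound_and_A2_general T N t ht0 htN hmesh α hα0 hα1 Nq θ w ε hSOE hεb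
end

section
/- Fix n with 1 ≤ n ≤ N and set Q(t) = ω_{2−α}(t_n − t) for 0 ≤ t < t_n, with Q(t_n) = 0. For 1 ≤ k ≤ n let Π_{1,k}Q be the linear interpolant of Q at t_{k−1} and t_k, and let E_k(t) = Q(t) − (Π_{1,k}Q)(t). Then for every t ∈ (t_{k−1}, t_k): (a) E_k(t) ≥ 0 for all 1 ≤ k ≤ n; (b) E_n(t) ≤ (t − t_{n−1}) a^{(n)}_0; (c) for 1 ≤ k ≤ n−1, E_k(t) ≤ 2 (t − t_{k−1}) (a^{(n)}_{n−k−1} − a^{(n)}_{n−k}). -/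
/-!
In the variable `s = t_n - x` the error `E_k` is, up to the factor `1 / Γ(2 - α)`, the error of
linear interpolation of the concave function `f s = s ^ (1 - α)` on `[a, b]` with
`a = t_n - t_k`, `b = t_n - t_{k-1}`; so (a) is concavity of `f` and (b) its monotonicity.
For (c), put `c = t_n - t_{k+1}`. The tangent of `f` at `b` bounds the error by
`(b - s) (slope f a b - f' b)`. The derivative `f'` is convex, so the trapezoid rule gives
`slope f a b ≤ (f' a + f' b) / 2`, while concavity of `f` gives `f' b ≤ f' a ≤ slope f c a`;
together, `slope f a b - f' b ≤ 2 (slope f c a - slope f a b)`.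
-/

open Real Finset

/-- The error `E_k(x) = Q(x) - (Π_{1,k}Q)(x)` of the linear interpolant on `[t_{k-1}, t_k]`
of `Q(x) = ω_{2-α}(t_n - x)`. -/
noncomputable def interpErr (α : ℝ) (t : ℕ → ℝ) (n k : ℕ) (x : ℝ) : ℝ :=
  omegaK (2 - α) (t n - x) -
    (omegaK (2 - α) (t n - t (k - 1)) * (t k - x) +
      omegaK (2 - α) (t n - t k) * (x - t (k - 1))) / (t k - t (k - 1))

open Set MeasureTheory intervalIntegral

lemma ConvexOn.intervalIntegral_le_trapezoid {g : ℝ → ℝ} {a b : ℝ} (hab : a ≤ b)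
    (hg : ConvexOn ℝ (Icc a b) g) (hint : IntervalIntegrable g volume a b) :
    ∫ x in a..b, g x ≤ (b - a) * (g a + g b) / 2 := by
  rcases hab.eq_or_lt with rfl | hab
  · simp
  have hchord : ∀ x ∈ Icc a b, g x ≤ (g a * (b - x) + g b * (x - a)) / (b - a) := by
    intro x hx
    have h := hg.2 (left_mem_Icc.mpr hab.le) (right_mem_Icc.mpr hab.le)
      (div_nonneg (sub_nonneg.mpr hx.2) (sub_nonneg.mpr hab.le))
      (div_nonneg (sub_nonneg.mpr hx.1) (sub_nonneg.mpr hab.le)) (by field_simp; ring)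
    have hx : (b - x) / (b - a) * a + (x - a) / (b - a) * b = x := by field_simp; ring
    simp only [smul_eq_mul, hx] at h
    exact h.trans_eq (by ring)
  calc ∫ x in a..b, g x ≤ ∫ x in a..b, (g a * (b - x) + g b * (x - a)) / (b - a) :=
        integral_mono_on hab.le hint (Continuous.intervalIntegrable (by fun_prop) _ _) hchord
    _ = (b - a) * (g a + g b) / 2 := by
        simp_rw [show ∀ x, g a * (b - x) + g b * (x - a) = (g b - g a) * x + (g a * b - g b * a)
          from fun x => by ring]
        rw [intervalIntegral.integral_div, intervalIntegral.integral_add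
          (Continuous.intervalIntegrable (by fun_prop) _ _) intervalIntegrable_const,
          intervalIntegral.integral_const_mul, integral_id, intervalIntegral.integral_const,
          smul_eq_mul]
        field_simp [(sub_pos.mpr hab).ne']
        ring

lemma sub_le_trapezoid_of_hasDerivAt {f f' : ℝ → ℝ} {a b : ℝ} (hab : a ≤ b)
    (hf : ∀ x ∈ Icc a b, HasDerivAt f (f' x) x) (hf' : ConvexOn ℝ (Icc a b) f')
    (hint : IntervalIntegrable f' volume a b) :
    f b - f a ≤ (b - a) * (f' a + f' b) / 2 := by
  rw [← integral_eq_sub_of_hasDerivAt (fun x hx => hf x (by rwa [uIcc_of_le hab] at hx)) hint]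
  exact hf'.intervalIntegral_le_trapezoid hab hint

noncomputable def linInterpErr (f : ℝ → ℝ) (a b s : ℝ) : ℝ :=
  f s - (f a * (b - s) + f b * (s - a)) / (b - a)

section LinInterpErr

variable {S : Set ℝ} {f f' : ℝ → ℝ} {a b c s : ℝ}

lemma linInterpErr_eq_sub_add_mul_slope (hab : a ≠ b) :
    linInterpErr f a b s = f s - f b + (b - s) * slope f a b := by
  rw [linInterpErr, slope_def_field]
  field_simp [sub_ne_zero.mpr hab.symm]
  ring

lemma linInterpErr_le_mul_slope_of_le (hab : a ≠ b) (hsb : f s ≤ f b) :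
    linInterpErr f a b s ≤ (b - s) * slope f a b := by
  rw [linInterpErr_eq_sub_add_mul_slope hab]
  linarith

namespace ConcaveOn

lemma linInterpErr_nonneg (hf : ConcaveOn ℝ S f) (ha : a ∈ S) (hb : b ∈ S)
    (has : a < s) (hsb : s < b) : 0 ≤ linInterpErr f a b s := by
  have hchord := hf.neg.secant_mono_aux1 ha hb has hsb
  simp only [Pi.neg_apply] at hchord
  rw [linInterpErr, sub_nonneg, div_le_iff₀ (by linarith)]
  linarith

lemma linInterpErr_le_mul_slope_sub_deriv (hf : ConcaveOn ℝ S f) (hs : s ∈ S) (hb : b ∈ S)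
    (hab : a ≠ b) (hsb : s < b) (hf' : HasDerivAt f (f' b) b) :
    linInterpErr f a b s ≤ (b - s) * (slope f a b - f' b) := by
  have htangent := hf.le_slope_of_hasDerivAt hs hb hsb hf'
  rw [slope_def_field, le_div_iff₀ (by linarith)] at htangent
  rw [linInterpErr_eq_sub_add_mul_slope hab]
  linarith

lemma slope_sub_deriv_le_two_mul_slope_sub (hf : ConcaveOn ℝ S f) (hc : c ∈ S) (hb : b ∈ S)
    (hca : c < a) (hab : a < b) (hf' : ∀ x ∈ Icc a b, HasDerivAt f (f' x) x)
    (hf'_conv : ConvexOn ℝ (Icc a b) f') (hf'_int : IntervalIntegrable f' volume a b) :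
    slope f a b - f' b ≤ 2 * (slope f c a - slope f a b) := by
  have ha : a ∈ S := hf.1.ordConnected.out hc hb ⟨hca.le, hab.le⟩
  have hfa := hf' a (left_mem_Icc.mpr hab.le)
  have hfb := hf' b (right_mem_Icc.mpr hab.le)
  have htrap : slope f a b ≤ (f' a + f' b) / 2 := by
    rw [slope_def_field, div_le_iff₀ (sub_pos.mpr hab)]
    linarith [sub_le_trapezoid_of_hasDerivAt hab.le hf' hf'_conv hf'_int]
  have hleft : f' a ≤ slope f c a := hf.le_slope_of_hasDerivAt hc ha hca hfa
  have hanti : f' b ≤ f' a :=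
    (hf.le_slope_of_hasDerivAt ha hb hab hfb).trans (hf.slope_le_of_hasDerivAt ha hb hab hfa)
  linarith

lemma linInterpErr_le_two_mul_slope_sub (hf : ConcaveOn ℝ S f) (hc : c ∈ S) (hb : b ∈ S)
    (hca : c < a) (has : a < s) (hsb : s < b) (hf' : ∀ x ∈ Icc a b, HasDerivAt f (f' x) x)
    (hf'_conv : ConvexOn ℝ (Icc a b) f') (hf'_int : IntervalIntegrable f' volume a b) :
    linInterpErr f a b s ≤ 2 * (b - s) * (slope f c a - slope f a b) := by
  have hs : s ∈ S := hf.1.ordConnected.out hc hb ⟨(hca.trans has).le, hsb.le⟩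
  calc linInterpErr f a b s ≤ (b - s) * (slope f a b - f' b) :=
        hf.linInterpErr_le_mul_slope_sub_deriv hs hb (has.trans hsb).ne hsb
          (hf' b (right_mem_Icc.mpr (has.trans hsb).le))
    _ ≤ (b - s) * (2 * (slope f c a - slope f a b)) := by
        gcongr
        exact hf.slope_sub_deriv_le_two_mul_slope_sub hc hb hca (has.trans hsb) hf' hf'_conv
          hf'_int
    _ = 2 * (b - s) * (slope f c a - slope f a b) := by ring

end ConcaveOn

end LinInterpErr

lemma convexOn_rpow_of_nonpos {q : ℝ} (hq : q ≤ 0) :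
    ConvexOn ℝ (Ioi 0) fun x : ℝ => x ^ q := by
  refine MonotoneOn.convexOn_of_deriv (convex_Ioi 0)
    (fun x hx => (Real.continuousAt_rpow_const x q (Or.inl hx.ne')).continuousWithinAt)
    (fun x hx => ?_) (fun x hx y hy hxy => ?_) <;> rw [interior_Ioi] at *
  · exact (Real.hasDerivAt_rpow_const (Or.inl hx.ne')).differentiableAt.differentiableWithinAt
  · rw [Real.deriv_rpow_const, Real.deriv_rpow_const]
    exact mul_le_mul_of_nonpos_left
      (Real.antitoneOn_rpow_Ioi_of_exponent_nonpos (by linarith) hx hy hxy) hq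

lemma linInterpErr_rpow_le_two_mul_slope_sub {p a b c s : ℝ} (hp0 : 0 ≤ p) (hp1 : p ≤ 1)
    (hc : 0 ≤ c) (hca : c < a) (has : a < s) (hsb : s < b) :
    linInterpErr (fun x => x ^ p) a b s ≤
      2 * (b - s) * (slope (fun x => x ^ p) c a - slope (fun x => x ^ p) a b) := by
  have hpos : ∀ x ∈ Icc a b, 0 < x := fun x hx => hc.trans_lt (hca.trans_le hx.1)
  refine (Real.concaveOn_rpow hp0 hp1).linInterpErr_le_two_mul_slope_sub
    (f' := fun x => p * x ^ (p - 1)) hc (mem_Ici.mpr (by linarith)) hca has hsb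
    (fun x hx => Real.hasDerivAt_rpow_const (Or.inl (hpos x hx).ne')) ?_ ?_
  · exact ((convexOn_rpow_of_nonpos (by linarith)).subset hpos (convex_Icc a b)).smul hp0
  · refine ContinuousOn.intervalIntegrable fun x hx => ?_
    rw [uIcc_of_le (has.trans hsb).le] at hx
    exact (continuousAt_const.mul
      (Real.continuousAt_rpow_const x _ (Or.inl (hpos x hx).ne'))).continuousWithinAt

lemma strictMonoOn_Iic_of_sub_one_lt {N : ℕ} {t : ℕ → ℝ}
    (ht : ∀ k, 1 ≤ k → k ≤ N → t (k - 1) < t k) : StrictMonoOn t (Set.Iic N) :=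
  strictMonoOn_Iic_of_lt_succ fun m hm => by
    simpa [Order.succ_eq_add_one] using ht (m + 1) (by omega) hm

lemma omegaK_two_sub (α s : ℝ) : omegaK (2 - α) s = s ^ (1 - α) / Real.Gamma (2 - α) := by
  rw [omegaK, show 2 - α - 1 = 1 - α by ring]

lemma interpErr_eq_linInterpErr (α : ℝ) (t : ℕ → ℝ) (n k : ℕ) (x : ℝ) :
    interpErr α t n k x = linInterpErr (fun s => s ^ (1 - α)) (t n - t k) (t n - t (k - 1))
      (t n - x) / Real.Gamma (2 - α) := by
  simp only [interpErr, linInterpErr, omegaK_two_sub]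
  ring

lemma L1K_eq_slope (α : ℝ) (t : ℕ → ℝ) (n k : ℕ) :
    L1K α t n k =
      slope (fun s => s ^ (1 - α)) (t n - t k) (t n - t (k - 1)) / Real.Gamma (2 - α) := by
  simp only [L1K, slope_def_field, omegaK_two_sub]
  ring

theorem interpolation_error_bounds_general
    (N : ℕ)
    (t : ℕ → ℝ)
    (hmesh : ∀ k, 1 ≤ k → k ≤ N → t (k - 1) < t k)
    (α : ℝ) (hα0 : 0 < α) (hα1 : α < 1)
    (n : ℕ) (hnN : n ≤ N) :
    ∀ k, 1 ≤ k → k ≤ n → ∀ x, t (k - 1) < x → x < t k →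
      (0 ≤ interpErr α t n k x) ∧
      (k = n → interpErr α t n n x ≤ (x - t (n - 1)) * L1K α t n n) ∧
      (k ≤ n - 1 → interpErr α t n k x ≤
        2 * (x - t (k - 1)) * (L1K α t n (k + 1) - L1K α t n k)) := by
  intro k hk1 hkn x hx1 hx2
  have hp0 : 0 ≤ 1 - α := by linarith
  have hp1 : 1 - α ≤ 1 := by linarith
  have hΓ : 0 ≤ Real.Gamma (2 - α) := (Real.Gamma_pos_of_pos (by linarith)).le
  have htkn : t k ≤ t n := (strictMonoOn_Iic_of_sub_one_lt hmesh).monotoneOn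
    (mem_Iic.mpr (hkn.trans hnN)) (mem_Iic.mpr hnN) hkn
  have hx : x - t (k - 1) = (t n - t (k - 1)) - (t n - x) := by ring
  refine ⟨?_, ?_, ?_⟩
  · rw [interpErr_eq_linInterpErr]
    exact div_nonneg ((Real.concaveOn_rpow hp0 hp1).linInterpErr_nonneg
      (mem_Ici.mpr (by linarith)) (mem_Ici.mpr (by linarith)) (by linarith) (by linarith)) hΓ
  · rintro rfl
    rw [interpErr_eq_linInterpErr, L1K_eq_slope, ← mul_div_assoc, hx]
    exact div_le_div_of_nonneg_right (linInterpErr_le_mul_slope_of_le (by linarith)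
      (Real.rpow_le_rpow (by linarith) (by linarith) hp0)) hΓ
  · intro hk
    have htk1 : t k < t (k + 1) := by simpa using hmesh (k + 1) (by omega) (by omega)
    have htk1n : t (k + 1) ≤ t n := (strictMonoOn_Iic_of_sub_one_lt hmesh).monotoneOn
      (mem_Iic.mpr (by omega)) (mem_Iic.mpr hnN) (by omega)
    rw [interpErr_eq_linInterpErr, L1K_eq_slope, L1K_eq_slope, Nat.add_sub_cancel, ← sub_div,
      ← mul_div_assoc, hx]
    exact div_le_div_of_nonneg_right (linInterpErr_rpow_le_two_mul_slope_sub hp0 hp1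
      (by linarith) (by linarith) (by linarith) (by linarith)) hΓ

theorem interpolation_error_bounds
    (T : ℝ) (hT : 0 < T) (N : ℕ) (hN : 1 ≤ N)
    (t : ℕ → ℝ) (ht0 : t 0 = 0) (htN : t N = T)
    (hmesh : ∀ k, 1 ≤ k → k ≤ N → t (k - 1) < t k)
    (α : ℝ) (hα0 : 0 < α) (hα1 : α < 1)
    (n : ℕ) (hn1 : 1 ≤ n) (hnN : n ≤ N) :
    ∀ k, 1 ≤ k → k ≤ n → ∀ x, t (k - 1) < x → x < t k →
      (0 ≤ interpErr α t n k x) ∧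
      (k = n → interpErr α t n n x ≤ (x - t (n - 1)) * L1K α t n n) ∧
      (k ≤ n - 1 → interpErr α t n k x ≤
        2 * (x - t (k - 1)) * (L1K α t n (k + 1) - L1K α t n k)) :=
  interpolation_error_bounds_general N t hmesh α hα0 hα1 n hnN
end

section
/- Let 0 = t_0 < t_1 < ⋯ < t_N = T be a mesh with steps τ_k = t_k − t_{k−1}, let α ∈ (0,1), and let a^{(n)}_{n−k} be the L1 kernel. Then for every n with 2 ≤ n ≤ N one has a^{(n)}_0 − a^{(n)}_1 > (α/τ_n) ω_{2−α}(τ_n); consequently, if τ_n ≤ 1 then a^{(n)}_0 − a^{(n)}_1 ≥ α · ω_{2−α}(1). -/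
open Real Finset

/-!
Write `ω = ω_{2-α}`, `τ = τ_n` and `σ = t_n - t_{n-2} = τ_n + τ_{n-1}`. Since `ω 0 = 0`, one
has `a₀ = ω τ / τ`, while `a₁` is the slope of the secant of `ω` over `[τ, σ]`. The function
`ω s = s^(1-α) / Γ(2-α)` is strictly concave with `ω' τ = (1 - α) ω τ / τ`, so
`a₁ < (1 - α) ω τ / τ`, i.e. `a₀ - a₁ > α ω τ / τ`. For `τ ≤ 1` the bound follows because
`ω s / s = s^(-α) / Γ(2 - α)` is decreasing in `s`.
-/

lemma omegaK_zero {μ : ℝ} (hμ : μ ≠ 1) : omegaK μ 0 = 0 := by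
  rw [omegaK, zero_rpow (sub_ne_zero.2 hμ), zero_div]

lemma slope_omegaK (μ a b : ℝ) :
    slope (omegaK μ) a b = slope (fun x ↦ x ^ (μ - 1)) a b / Gamma μ := by
  simp only [slope_def_field, omegaK]
  ring

lemma slope_omegaK_lt {μ a b : ℝ} (hμ₁ : 1 < μ) (hμ₂ : μ < 2) (ha : 0 < a) (hab : a < b) :
    slope (omegaK μ) a b < (μ - 1) * omegaK μ a / a := by
  have hderiv : HasDerivAt (fun x ↦ x ^ (μ - 1)) ((μ - 1) * a ^ (μ - 1) / a) a := by
    convert hasDerivAt_rpow_const (p := μ - 1) (Or.inl ha.ne') using 1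
    rw [rpow_sub_one ha.ne' (μ - 1)]
    ring
  have hconcave := strictConcaveOn_rpow (p := μ - 1) (by linarith) (by linarith)
  have hslope := hconcave.slope_lt_of_hasDerivAt ha.le (ha.trans hab).le hab hderiv
  have hrhs : (μ - 1) * omegaK μ a / a = (μ - 1) * a ^ (μ - 1) / a / Gamma μ := by
    rw [omegaK]
    ring
  rw [slope_omegaK, hrhs]
  exact div_lt_div_of_pos_right hslope (Gamma_pos_of_pos (by linarith))

lemma omegaK_one_le_omegaK_div_self {μ s : ℝ} (hμ₀ : 0 < μ) (hμ₂ : μ ≤ 2) (hs₀ : 0 < s)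
    (hs₁ : s ≤ 1) : omegaK μ 1 ≤ omegaK μ s / s := by
  have hpow : s ^ (μ - 1) / s = s ^ (μ - 2) := by
    rw [← rpow_sub_one hs₀.ne']
    ring_nf
  rw [omegaK, omegaK, one_rpow, div_right_comm, hpow]
  gcongr
  exact one_le_rpow_of_pos_of_le_one_of_nonpos hs₀ hs₁ (by linarith)

lemma L1K_self {α : ℝ} (hα : α ≠ 1) (t : ℕ → ℝ) (n : ℕ) :
    L1K α t n n = omegaK (2 - α) (t n - t (n - 1)) / (t n - t (n - 1)) := by
  rw [L1K, sub_self, omegaK_zero (by contrapose! hα; linarith), sub_zero]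

lemma L1K_pred (α : ℝ) (t : ℕ → ℝ) (n : ℕ) :
    L1K α t n (n - 1) =
      slope (omegaK (2 - α)) (t n - t (n - 1)) (t n - t (n - 1 - 1)) := by
  rw [L1K, slope_def_field, sub_sub_sub_cancel_left]

theorem L1_kernel_first_difference_lower_bound_general
    (N : ℕ)
    (t : ℕ → ℝ)
    (hmesh : ∀ k, 1 ≤ k → k ≤ N → t (k - 1) < t k)
    (α : ℝ) (hα0 : 0 < α) (hα1 : α < 1) :
    ∀ n, 2 ≤ n → n ≤ N →
      L1K α t n n - L1K α t n (n - 1) >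
        (α / (t n - t (n - 1))) * omegaK (2 - α) (t n - t (n - 1)) ∧
      (t n - t (n - 1) ≤ 1 →
        L1K α t n n - L1K α t n (n - 1) ≥ α * omegaK (2 - α) 1) := by
  intro n hn hnN
  set τ := t n - t (n - 1)
  have hτ : 0 < τ := sub_pos.2 (hmesh n (by omega) hnN)
  have hτσ : τ < t n - t (n - 1 - 1) := by
    have := hmesh (n - 1) (by omega) (by omega)
    linarith
  have hslope := slope_omegaK_lt (μ := 2 - α) (by linarith) (by linarith) hτ hτσ
  have hdiff : L1K α t n n - L1K α t n (n - 1) > α / τ * omegaK (2 - α) τ := by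
    rw [L1K_self hα1.ne, L1K_pred]
    have : α / τ * omegaK (2 - α) τ =
        omegaK (2 - α) τ / τ - (2 - α - 1) * omegaK (2 - α) τ / τ := by ring
    linarith
  refine ⟨hdiff, fun hτ₁ => ?_⟩
  calc α * omegaK (2 - α) 1
      ≤ α * (omegaK (2 - α) τ / τ) :=
        mul_le_mul_of_nonneg_left
          (omegaK_one_le_omegaK_div_self (by linarith) (by linarith) hτ hτ₁) hα0.le
    _ = α / τ * omegaK (2 - α) τ := by ring
    _ ≤ _ := hdiff.le

theorem L1_kernel_first_difference_lower_bound
    (T : ℝ) (hT : 0 < T) (N : ℕ) (hN : 1 ≤ N)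
    (t : ℕ → ℝ) (ht0 : t 0 = 0) (htN : t N = T)
    (hmesh : ∀ k, 1 ≤ k → k ≤ N → t (k - 1) < t k)
    (α : ℝ) (hα0 : 0 < α) (hα1 : α < 1) :
    ∀ n, 2 ≤ n → n ≤ N →
      L1K α t n n - L1K α t n (n - 1) >
        (α / (t n - t (n - 1))) * omegaK (2 - α) (t n - t (n - 1)) ∧
      (t n - t (n - 1) ≤ 1 →
        L1K α t n n - L1K α t n (n - 1) ≥ α * omegaK (2 - α) 1) :=
  L1_kernel_first_difference_lower_bound_general N t hmesh α hα0 hα1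
end
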